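/- arXiv:2206.08450 — 3 statements merged into one kernel-verified Lean document; each statement's English description precedes it below -/
import Mathlib

section
/- For any positive integer l, let f be defined on points of ℝ^l with all nonzero coordinates by f(m₁,…,m_l) = (Σᵢ mᵢ^{-2})^{-1/2}. Then for all m, n ∈ ℝ^l with all coordinates nonzero and of the same sign pattern, |f(m) - f(n)| ≤ ‖m - n‖_∞. -/
lemma key_lip (l : ℕ) (hl : 0 < l) (a b : Fin l → ℝ)
    (ha : ∀ i, 0 < a i) (hb : ∀ i, 0 < b i) (t : ℝ) (ht : 0 ≤ t)
    (hab : ∀ i, a i ≤ b i + t) :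
    1 / Real.sqrt (∑ i, ((a i) ^ 2)⁻¹) ≤ 1 / Real.sqrt (∑ i, ((b i) ^ 2)⁻¹) + t := by
  haveI : Nonempty (Fin l) := ⟨⟨0, hl⟩⟩
  set S : ℝ := ∑ i, ((b i) ^ 2)⁻¹ with hSdef
  have hSpos : 0 < S := Finset.sum_pos (fun i _ => by have := hb i; positivity) Finset.univ_nonempty
  set A : ℝ := 1 / Real.sqrt S with hAdef
  have hApos : 0 < A := by positivity
  have hAS : A ^ 2 * S = 1 := by
    rw [hAdef, div_pow, one_pow, Real.sq_sqrt hSpos.le]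
    field_simp
  have hAle : ∀ i, A ≤ b i := by
    intro i
    have h1 : ((b i) ^ 2)⁻¹ ≤ S :=
      Finset.single_le_sum (f := fun i => ((b i) ^ 2)⁻¹) (fun i _ => by have := hb i; positivity)
        (Finset.mem_univ i)
    have h2 : A ^ 2 ≤ (b i) ^ 2 := by
      have hb2 : 0 < ((b i) ^ 2)⁻¹ := by have := hb i; positivity
      have := mul_le_mul_of_nonneg_left h1 (sq_nonneg A)
      rw [hAS] at this
      have hbne : (b i) ^ 2 ≠ 0 := by have := hb i; positivity
      calc A ^ 2 = (A ^ 2 * ((b i)^2)⁻¹) * (b i)^2 := by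
            rw [mul_assoc, inv_mul_cancel₀ hbne, mul_one]
        _ ≤ 1 * (b i)^2 := by
            apply mul_le_mul_of_nonneg_right this (by positivity)
        _ = (b i)^2 := one_mul _
    nlinarith [hApos, hb i]
  have hApt : 0 < A + t := by positivity
  have hkey : ∀ i, (A / (A + t)) ^ 2 * ((b i) ^ 2)⁻¹ ≤ ((a i) ^ 2)⁻¹ := by
    intro i
    have h2 : A * a i ≤ b i * (A + t) := by nlinarith [hab i, hAle i, ht]
    have h3 : A ^ 2 * (a i) ^ 2 ≤ (b i) ^ 2 * (A + t) ^ 2 := by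
      nlinarith [h2, mul_pos hApos (ha i), mul_pos (hb i) hApt]
    have h4 : A ^ 2 / ((A + t) ^ 2 * (b i) ^ 2) ≤ 1 / (a i) ^ 2 := by
      rw [div_le_div_iff₀ (by have := hb i; positivity) (by have := ha i; positivity)]
      nlinarith [h3]
    calc (A / (A + t)) ^ 2 * ((b i) ^ 2)⁻¹ = A ^ 2 / ((A + t) ^ 2 * (b i) ^ 2) := by
          rw [div_pow]; have := hb i; field_simp <;> ring
      _ ≤ 1 / (a i) ^ 2 := h4
      _ = ((a i) ^ 2)⁻¹ := one_div _
  have hsum : ((A + t) ^ 2)⁻¹ ≤ ∑ i, ((a i) ^ 2)⁻¹ := by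
    have h5 : (A / (A + t)) ^ 2 * S ≤ ∑ i, ((a i) ^ 2)⁻¹ := by
      rw [hSdef, Finset.mul_sum]
      exact Finset.sum_le_sum fun i _ => hkey i
    have h6 : (A / (A + t)) ^ 2 * S = ((A + t) ^ 2)⁻¹ := by
      rw [div_pow, div_mul_eq_mul_div, hAS, one_div]
    linarith [h5, h6 ▸ h5]
  have h7 : (A + t)⁻¹ ≤ Real.sqrt (∑ i, ((a i) ^ 2)⁻¹) := by
    have := Real.sqrt_le_sqrt hsum
    rwa [show ((A+t)^2)⁻¹ = ((A+t)⁻¹)^2 by rw [inv_pow], Real.sqrt_sq (by positivity)] at this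
  calc 1 / Real.sqrt (∑ i, ((a i) ^ 2)⁻¹) ≤ 1 / (A + t)⁻¹ :=
        one_div_le_one_div_of_le (by positivity) h7
    _ = A + t := by rw [one_div, inv_inv]

/-- The map `m ↦ (∑ i, m i ^ (-2))^(-1/2)` is 1-Lipschitz w.r.t. the sup norm,
on points with all coordinates nonzero and the same sign pattern. -/
theorem stmt1 (l : ℕ) (hl : 0 < l) (m n : Fin l → ℝ)
    (hm : ∀ i, m i ≠ 0) (hn : ∀ i, n i ≠ 0)
    (hsign : ∀ i, 0 < m i ↔ 0 < n i) :
    |1 / Real.sqrt (∑ i, (m i) ^ (-2 : ℤ)) - 1 / Real.sqrt (∑ i, (n i) ^ (-2 : ℤ))|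
      ≤ ‖m - n‖ := by
  have hmrw : ∑ i, (m i) ^ (-2 : ℤ) = ∑ i, (|m i| ^ 2)⁻¹ := by
    apply Finset.sum_congr rfl
    intro i _
    rw [show (-2 : ℤ) = -(2:ℕ) by norm_num, zpow_neg, zpow_natCast, sq_abs]
  have hnrw : ∑ i, (n i) ^ (-2 : ℤ) = ∑ i, (|n i| ^ 2)⁻¹ := by
    apply Finset.sum_congr rfl
    intro i _
    rw [show (-2 : ℤ) = -(2:ℕ) by norm_num, zpow_neg, zpow_natCast, sq_abs]
  rw [hmrw, hnrw]
  set t : ℝ := ‖m - n‖ with htdef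
  have ht : 0 ≤ t := norm_nonneg _
  have habs : ∀ i, |(|m i|) - (|n i|)| ≤ t := by
    intro i
    have h := norm_le_pi_norm (m - n) i
    rw [Pi.sub_apply, Real.norm_eq_abs] at h
    exact le_trans (abs_abs_sub_abs_le_abs_sub _ _) h
  have ha : ∀ i, 0 < |m i| := fun i => abs_pos.mpr (hm i)
  have hb : ∀ i, 0 < |n i| := fun i => abs_pos.mpr (hn i)
  rw [abs_sub_le_iff]
  constructor
  · have := key_lip l hl (fun i => |m i|) (fun i => |n i|) ha hb t ht
      (fun i => by linarith [(abs_le.mp (habs i)).1, (abs_le.mp (habs i)).2])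
    linarith [this]
  · have := key_lip l hl (fun i => |n i|) (fun i => |m i|) hb ha t ht
      (fun i => by linarith [(abs_le.mp (habs i)).1, (abs_le.mp (habs i)).2])
    linarith [this]
end

section
/- For a finite hypothesis class H over finite domain X, a function μ : H → ℝ, and ε > 0, define the (μ,ε)-extended teaching dimension XTD(H,μ,ε) = max over all functions h : X → {-1,+1} of the minimum size of a set S ⊆ X such that any two classifiers h₁, h₂ ∈ H agreeing with h on S satisfy |μ(h₁) - μ(h₂)| ≤ 2ε. Then XTD(H,μ,ε) ≤ Cost(H), where Cost is defined recursively by Cost(V) = 0 if max_{h,h'∈V}(μ(h)-μ(h')) ≤ 2ε and Cost(V) = 1 + min_x max_y Cost({h ∈ V : h(x)=y}) otherwise. -/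
/-- `CostLE μm ε V n` holds iff the minimax query cost of `V` is at most `n`; this is
the inductive characterization of the recursion
`Cost(V) = 0` if `diam_μ(V) ≤ 2ε`, else `Cost(V) = 1 + min_x max_y Cost(V[(x,y)])`. -/
inductive CostLE {X : Type*} [DecidableEq (X → ℤ)] (μm : (X → ℤ) → ℝ) (ε : ℝ) :
    Finset (X → ℤ) → ℕ → Prop
  | base (V : Finset (X → ℤ)) (n : ℕ)
      (hdiam : ∀ h ∈ V, ∀ h' ∈ V, μm h - μm h' ≤ 2 * ε) : CostLE μm ε V n
  | step (V : Finset (X → ℤ)) (n : ℕ) (x : X)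
      (hpos : CostLE μm ε (V.filter fun h => h x = 1) n)
      (hneg : CostLE μm ε (V.filter fun h => h x = -1) n) : CostLE μm ε V (n + 1)

/-- The minimax query complexity `Cost(V) ∈ ℕ ∪ {∞}`. -/
noncomputable def Cost {X : Type*} [DecidableEq (X → ℤ)]
    (μm : (X → ℤ) → ℝ) (ε : ℝ) (V : Finset (X → ℤ)) : ℕ∞ :=
  sInf {n : ℕ∞ | ∃ k : ℕ, (k : ℕ∞) = n ∧ CostLE μm ε V k}

lemma specLemma {X : Type*} [DecidableEq X] [DecidableEq (X → ℤ)]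
    (μm : (X → ℤ) → ℝ) (ε : ℝ) (h : X → ℤ) (hhr : ∀ x, h x = 1 ∨ h x = -1) :
    ∀ V : Finset (X → ℤ), ∀ n : ℕ, CostLE μm ε V n →
      ∃ S : Finset X, S.card ≤ n ∧
        ∀ h₁ ∈ V, ∀ h₂ ∈ V, (∀ x ∈ S, h₁ x = h x) → (∀ x ∈ S, h₂ x = h x) →
          |μm h₁ - μm h₂| ≤ 2 * ε := by
  intro V n hc
  induction hc with
  | base V n hdiam =>
    refine ⟨∅, Nat.zero_le _, ?_⟩
    intro h₁ h1 h₂ h2 _ _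
    rw [abs_sub_le_iff]
    exact ⟨hdiam _ h1 _ h2, hdiam _ h2 _ h1⟩
  | step V n x hpos hneg ihpos ihneg =>
    obtain ⟨S₁, hc₁, hs₁⟩ := ihpos
    obtain ⟨S₂, hc₂, hs₂⟩ := ihneg
    rcases hhr x with hx | hx
    · refine ⟨insert x S₁, le_trans (Finset.card_insert_le _ _) (by omega), ?_⟩
      intro h₁ h1 h₂ h2 ag1 ag2
      refine hs₁ h₁ ?_ h₂ ?_ (fun y hy => ag1 y (Finset.mem_insert_of_mem hy))
        (fun y hy => ag2 y (Finset.mem_insert_of_mem hy))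
      · exact Finset.mem_filter.2 ⟨h1, (ag1 x (Finset.mem_insert_self _ _)).trans hx⟩
      · exact Finset.mem_filter.2 ⟨h2, (ag2 x (Finset.mem_insert_self _ _)).trans hx⟩
    · refine ⟨insert x S₂, le_trans (Finset.card_insert_le _ _) (by omega), ?_⟩
      intro h₁ h1 h₂ h2 ag1 ag2
      refine hs₂ h₁ ?_ h₂ ?_ (fun y hy => ag1 y (Finset.mem_insert_of_mem hy))
        (fun y hy => ag2 y (Finset.mem_insert_of_mem hy))
      · exact Finset.mem_filter.2 ⟨h1, (ag1 x (Finset.mem_insert_self _ _)).trans hx⟩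
      · exact Finset.mem_filter.2 ⟨h2, (ag2 x (Finset.mem_insert_self _ _)).trans hx⟩

/-- `XTD(H, μ, ε) ≤ Cost(H)`: for every (not necessarily in `H`) classifier `h`,
there is a `(μ,ε)`-specifying set `S` for `h` of size at most `Cost(H)`, i.e. any two
hypotheses in `H` agreeing with `h` on `S` have `μ`-values within `2ε`. -/
theorem stmt17 {X : Type*} [Fintype X] [DecidableEq (X → ℤ)]
    (μm : (X → ℤ) → ℝ) (ε : ℝ) (hε : 0 < ε)
    (H : Finset (X → ℤ)) (hH : ∀ h ∈ H, ∀ x, h x = 1 ∨ h x = -1)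
    (h : X → ℤ) (hhr : ∀ x, h x = 1 ∨ h x = -1) :
    ∃ S : Finset X,
      (∀ h₁ ∈ H, ∀ h₂ ∈ H, (∀ x ∈ S, h₁ x = h x) → (∀ x ∈ S, h₂ x = h x) →
        |μm h₁ - μm h₂| ≤ 2 * ε) ∧
      (S.card : ℕ∞) ≤ Cost μm ε H := by
  classical
  by_cases hne : ∃ k : ℕ, CostLE μm ε H k
  · obtain ⟨S, hcard, hspec⟩ := specLemma μm ε h hhr H (Nat.find hne) (Nat.find_spec hne)
    refine ⟨S, hspec, ?_⟩
    have h1 : (S.card : ℕ∞) ≤ (Nat.find hne : ℕ∞) := by exact_mod_cast hcard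
    refine h1.trans (le_sInf ?_)
    rintro m ⟨k, rfl, hck⟩
    exact_mod_cast Nat.find_min' hne hck
  · refine ⟨Finset.univ, ?_, le_sInf ?_⟩
    · intro h₁ _ h₂ _ ag1 ag2
      have : h₁ = h₂ := funext fun x => (ag1 x (Finset.mem_univ x)).trans (ag2 x (Finset.mem_univ x)).symm
      rw [this, sub_self, abs_zero]
      linarith
    · rintro m ⟨k, rfl, hck⟩
      exact absurd ⟨k, hck⟩ hne
end

section
/- Let H be a finite hypothesis class on finite domain X, μ : H → ℝ, ε > 0, and define Cost(V) = 0 if diam_μ(V) ≤ 2ε, else Cost(V) = 1 + min_x max_y Cost(V[(x,y)]). Then for any deterministic query algorithm A with label budget N ≤ Cost(H) - 1, there exists h* ∈ H such that the output μ̂ of A when interacting with h* satisfies |μ̂ - μ(h*)| > ε. -/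
/-- The transcript of a deterministic query algorithm with query function `f`
interacting with target classifier `h`. -/
def hist {X : Type*} (f : List (X × ℤ) → X) (h : X → ℤ) : ℕ → List (X × ℤ)
  | 0 => []
  | n + 1 => hist f h n ++ [(f (hist f h n), h (f (hist f h n)))]

lemma hist_succ_eq {X : Type*} (f : List (X × ℤ) → X) (h : X → ℤ) (n : ℕ) :
    hist f h (n + 1) =
      (f [], h (f [])) :: hist (fun l => f ((f [], h (f [])) :: l)) h n := by
  induction n with
  | zero => simp [hist]
  | succ n ih =>
    show hist f h (n + 1) ++ _ = _
    rw [ih]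
    simp [hist]

lemma adversary {X : Type*} [DecidableEq (X → ℤ)]
    (μm : (X → ℤ) → ℝ) (ε : ℝ) :
    ∀ (N : ℕ) (f : List (X × ℤ) → X) (g : List (X × ℤ) → ℝ) (V : Finset (X → ℤ)),
      ¬ CostLE μm ε V N → ∃ h ∈ V, ε < |g (hist f h N) - μm h| := by
  intro N
  induction N with
  | zero =>
    intro f g V hnc
    by_contra hcon
    push_neg at hcon
    apply hnc
    apply CostLE.base
    intro h hh h' hh'
    have h1 := abs_le.mp (hcon h hh)
    have h2 := abs_le.mp (hcon h' hh')
    simp only [hist] at h1 h2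
    linarith [h1.1, h1.2, h2.1, h2.2]
  | succ N ih =>
    intro f g V hnc
    have key : ¬ CostLE μm ε (V.filter fun h => h (f []) = 1) N ∨
               ¬ CostLE μm ε (V.filter fun h => h (f []) = -1) N := by
      by_contra hc
      push_neg at hc
      exact hnc (CostLE.step V N (f []) hc.1 hc.2)
    rcases key with hk | hk
    · obtain ⟨h, hh, hlt⟩ := ih (fun l => f ((f [], 1) :: l))
        (fun l => g ((f [], 1) :: l)) _ hk
      have hx : h (f []) = 1 := (Finset.mem_filter.mp hh).2
      refine ⟨h, (Finset.mem_filter.mp hh).1, ?_⟩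
      rw [hist_succ_eq]
      simp only [hx]
      exact hlt
    · obtain ⟨h, hh, hlt⟩ := ih (fun l => f ((f [], -1) :: l))
        (fun l => g ((f [], -1) :: l)) _ hk
      have hx : h (f []) = -1 := (Finset.mem_filter.mp hh).2
      refine ⟨h, (Finset.mem_filter.mp hh).1, ?_⟩
      rw [hist_succ_eq]
      simp only [hx]
      exact hlt

/-- Lower bound for deterministic auditing: any deterministic query algorithm
`(f, g)` with label budget `N ≤ Cost(H) - 1` errs by more than `ε` on some `h* ∈ H`. -/
theorem stmt19 {X : Type*} [Fintype X] [DecidableEq (X → ℤ)]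
    (μm : (X → ℤ) → ℝ) (ε : ℝ) (hε : 0 < ε)
    (H : Finset (X → ℤ)) (hH : ∀ h ∈ H, ∀ x, h x = 1 ∨ h x = -1)
    (N : ℕ) (f : List (X × ℤ) → X) (g : List (X × ℤ) → ℝ)
    (hN : (N : ℕ∞) + 1 ≤ Cost μm ε H) :
    ∃ hstar ∈ H, ε < |g (hist f hstar N) - μm hstar| := by
  apply adversary μm ε N f g H
  intro hc
  have hle : Cost μm ε H ≤ (N : ℕ∞) := sInf_le ⟨N, rfl, hc⟩
  have : (N : ℕ∞) + 1 ≤ (N : ℕ∞) := le_trans hN hle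
  rw [← Nat.cast_one, ← Nat.cast_add, Nat.cast_le] at this
  omega
end
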